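/- arXiv:2511.01726 — 4 statements merged into one kernel-verified Lean document; each statement's English description precedes it below -/
import Mathlib

section
/- Let N be a positive integer and g : ℝ → ℝ a bounded function supported in [-N/2, N/2] satisfying the partition of unity property ∑_{n∈ℤ} g(x - n) = 1 for all x. Define k(x) = ∑_{n=-N+1}^{N-1} a_n g(x+n) where a_0 = b and a_n + a_{-n} = 2b for n = 1,…,N-1. Then for almost every x, ∑_{m∈ℤ} g(x+m) k(x+m) = b. -/
/-!
Off the null set of `x` for which some translate `x + m` hits `±N/2`, two nonzero translates
`g (x + m)`, `g (x + p)` satisfy `|p - m| ≤ N - 1`. Hence the sum is the quadratic form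
`∑ m, ∑ p, a (p - m) g (x + m) g (x + p)` of the finitely many nonzero translates. Symmetrizing in
`(m, p)` replaces `a (p - m)` by `(a (p - m) + a (m - p)) / 2 = b`, which leaves
`b (∑ m, g (x + m))² = b` by the partition of unity.
-/

open MeasureTheory Set

open Finset in
theorem sum_sum_mul_mul_eq_mul_sq {G K : Type*} [AddCommGroup G] [Field K] [NeZero (2 : K)]
    (F : Finset G) (a c : G → K) (b : K)
    (hpair : ∀ m ∈ F, ∀ p ∈ F, c m * c p ≠ 0 → a (p - m) + a (m - p) = 2 * b) :
    ∑ m ∈ F, ∑ p ∈ F, a (p - m) * (c m * c p) = b * (∑ m ∈ F, c m) ^ 2 := by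
  have hswap : ∑ m ∈ F, ∑ p ∈ F, a (p - m) * (c m * c p) =
      ∑ m ∈ F, ∑ p ∈ F, a (m - p) * (c m * c p) := by
    rw [sum_comm]
    simp_rw [mul_comm (c _) (c _)]
  apply mul_left_cancel₀ (two_ne_zero (α := K))
  calc 2 * ∑ m ∈ F, ∑ p ∈ F, a (p - m) * (c m * c p)
      = ∑ m ∈ F, ∑ p ∈ F, (a (p - m) + a (m - p)) * (c m * c p) := by
        simp_rw [add_mul, sum_add_distrib]
        rw [two_mul, ← hswap]
    _ = ∑ m ∈ F, ∑ p ∈ F, 2 * b * (c m * c p) := by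
        refine sum_congr rfl fun m hm => sum_congr rfl fun p hp => ?_
        by_cases h : c m * c p = 0
        · simp [h]
        · rw [hpair m hm p hp h]
    _ = 2 * (b * (∑ m ∈ F, c m) ^ 2) := by
        rw [sq, sum_mul_sum, mul_sum, mul_sum]
        exact sum_congr rfl fun m _ => by rw [mul_sum, mul_sum]; simp only [mul_assoc]

theorem mul_sum_shift_eq_sum {G K : Type*} [AddCommGroup G] [CommRing K]
    {J F : Finset G} {a c : G → K} (m : G)
    (hband : ∀ p, c m * c p ≠ 0 → p - m ∈ J) (hF : ∀ p ∉ F, c p = 0) :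
    c m * ∑ n ∈ J, a n * c (m + n) = ∑ p ∈ F, a (p - m) * (c m * c p) := by
  calc c m * ∑ n ∈ J, a n * c (m + n) = ∑ n ∈ J, a n * (c m * c (m + n)) := by
        rw [Finset.mul_sum]
        exact Finset.sum_congr rfl fun n _ => by ring
    _ = ∑ᶠ n, a n * (c m * c (m + n)) := by
        refine (finsum_eq_sum_of_support_subset _ fun n hn => ?_).symm
        by_contra hJ
        have : c m * c (m + n) = 0 := by
          by_contra h
          exact hJ (by simpa using hband _ h)
        simp [this] at hn
    _ = ∑ᶠ p, a (p - m) * (c m * c p) := by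
        rw [← finsum_comp_equiv (Equiv.addLeft m) (f := fun p => a (p - m) * (c m * c p))]
        simp
    _ = ∑ p ∈ F, a (p - m) * (c m * c p) :=
        finsum_eq_sum_of_support_subset _ fun p hp => by
          by_contra hpF
          exact hp (by simp [hF p hpF])

open Finset in
theorem sum_mul_sum_shift_eq_mul_sq {G K : Type*} [AddCommGroup G] [Field K] [NeZero (2 : K)]
    {J F : Finset G} {a c : G → K} {b : K}
    (hband : ∀ m p, c m * c p ≠ 0 → p - m ∈ J) (hF : ∀ p ∉ F, c p = 0)
    (ha : ∀ j ∈ J, a j + a (-j) = 2 * b) :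
    ∑ m ∈ F, c m * ∑ n ∈ J, a n * c (m + n) = b * (∑ m ∈ F, c m) ^ 2 := by
  rw [sum_congr rfl fun m _ => mul_sum_shift_eq_sum m (hband m) hF]
  refine sum_sum_mul_mul_eq_mul_sq F a c b fun m _ p _ h => ?_
  rw [← neg_sub p m]
  exact ha _ (hband m p h)

theorem add_neg_eq_of_mem_Icc {M : ℤ} {a : ℤ → ℝ} {b : ℝ} (ha0 : a 0 = b)
    (hasym : ∀ n : ℤ, 1 ≤ n → n ≤ M - 1 → a n + a (-n) = 2 * b) :
    ∀ j ∈ Finset.Icc (-M + 1) (M - 1), a j + a (-j) = 2 * b := by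
  intro j hj
  rw [Finset.mem_Icc] at hj
  rcases lt_trichotomy j 0 with hneg | rfl | hpos
  · simpa [add_comm] using hasym (-j) (by omega) (by omega)
  · rw [neg_zero, ha0, two_mul]
  · exact hasym j (by omega) (by omega)

section Translates

variable {g : ℝ → ℝ} {r x : ℝ}

theorem mem_Ioo_of_ne_zero (hsupp : ∀ y ∉ Icc (-r) r, g y = 0) {y : ℝ} (hy : g y ≠ 0)
    (hl : y ≠ -r) (hr : y ≠ r) : y ∈ Ioo (-r) r := by
  rw [← Icc_sdiff_both]
  exact ⟨by_contra fun h => hy (hsupp y h), by simp [hl, hr]⟩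

theorem apply_add_intCast_eq_zero (hsupp : ∀ y ∉ Icc (-r) r, g y = 0) {m : ℤ}
    (hm : m ∉ Finset.Icc ⌈-r - x⌉ ⌊r - x⌋) : g (x + m) = 0 := by
  refine hsupp _ fun ⟨hl, hr⟩ => hm ?_
  rw [Finset.mem_Icc, Int.ceil_le, Int.le_floor]
  constructor <;> linarith

theorem ae_forall_add_intCast_ne (r : ℝ) : ∀ᵐ x : ℝ, ∀ m : ℤ, x + m ≠ -r ∧ x + m ≠ r := by
  refine ae_all_iff.2 fun m => ?_
  filter_upwards [Measure.ae_ne volume (-r - m), Measure.ae_ne volume (r - m)] with x hl hr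
  constructor
  · contrapose! hl; linarith
  · contrapose! hr; linarith

theorem sub_mem_Icc_of_mul_ne_zero {N : ℕ} (hsupp : ∀ y ∉ Icc (-((N : ℝ) / 2)) (N / 2), g y = 0)
    (hx : ∀ m : ℤ, x + m ≠ -((N : ℝ) / 2) ∧ x + m ≠ N / 2) {m p : ℤ}
    (h : g (x + m) * g (x + p) ≠ 0) : p - m ∈ Finset.Icc (-(N : ℤ) + 1) (N - 1) := by
  obtain ⟨hm₁, hm₂⟩ := mem_Ioo_of_ne_zero hsupp (left_ne_zero_of_mul h) (hx m).1 (hx m).2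
  obtain ⟨hp₁, hp₂⟩ := mem_Ioo_of_ne_zero hsupp (right_ne_zero_of_mul h) (hx p).1 (hx p).2
  have hlt : p - m < (N : ℤ) := by exact_mod_cast (show (p - m : ℝ) < N by linarith)
  have hgt : -(N : ℤ) < p - m := by exact_mod_cast (show -(N : ℝ) < p - m by linarith)
  rw [Finset.mem_Icc]
  omega

theorem tsum_mul_eq_of_forall_add_intCast_ne {N : ℕ} {k : ℝ → ℝ} {a : ℤ → ℝ} {b : ℝ}
    (hsupp : ∀ y ∉ Icc (-((N : ℝ) / 2)) (N / 2), g y = 0)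
    (hPoU : ∀ y : ℝ, ∑' n : ℤ, g (y - n) = 1)
    (ha : ∀ j ∈ Finset.Icc (-(N : ℤ) + 1) (N - 1), a j + a (-j) = 2 * b)
    (hk : ∀ y : ℝ, k y = ∑ n ∈ Finset.Icc (-(N : ℤ) + 1) (N - 1), a n * g (y + n))
    (hx : ∀ m : ℤ, x + m ≠ -((N : ℝ) / 2) ∧ x + m ≠ N / 2) :
    ∑' m : ℤ, g (x + m) * k (x + m) = b := by
  set F := Finset.Icc ⌈-((N : ℝ) / 2) - x⌉ ⌊(N : ℝ) / 2 - x⌋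
  have hF : ∀ m ∉ F, g (x + m) = 0 := fun _ hm => apply_add_intCast_eq_zero hsupp hm
  have hsum : ∑ m ∈ F, g (x + m) = 1 := by
    rw [← hPoU x, ← (Equiv.neg ℤ).tsum_eq]
    simp only [Equiv.neg_apply, Int.cast_neg, sub_neg_eq_add]
    exact (tsum_eq_sum hF).symm
  calc ∑' m : ℤ, g (x + m) * k (x + m)
      = ∑ m ∈ F, g (x + m) * ∑ n ∈ Finset.Icc (-(N : ℤ) + 1) (N - 1), a n * g (x + ↑(m + n)) := by
        rw [tsum_eq_sum (s := F) fun m hm => by rw [hF m hm, zero_mul]]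
        simp [hk, add_assoc]
    _ = b * (∑ m ∈ F, g (x + m)) ^ 2 :=
        sum_mul_sum_shift_eq_mul_sq (c := fun m : ℤ => g (x + m))
          (fun _ _ h => sub_mem_Icc_of_mul_ne_zero hsupp hx h) hF ha
    _ = b := by rw [hsum, one_pow, mul_one]

end Translates

theorem stmt_0_general (N : ℕ) (g : ℝ → ℝ)
    (hsupp : ∀ x : ℝ, x ∉ Set.Icc (-(N : ℝ) / 2) ((N : ℝ) / 2) → g x = 0)
    (hPoU : ∀ x : ℝ, ∑' n : ℤ, g (x - n) = 1)
    (b : ℝ) (a : ℤ → ℝ)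
    (ha0 : a 0 = b)
    (hasym : ∀ n : ℤ, 1 ≤ n → n ≤ (N : ℤ) - 1 → a n + a (-n) = 2 * b)
    (k : ℝ → ℝ)
    (hk : ∀ x : ℝ, k x = ∑ n ∈ Finset.Icc (-(N : ℤ) + 1) ((N : ℤ) - 1), a n * g (x + n)) :
    ∀ᵐ x : ℝ, ∑' m : ℤ, g (x + m) * k (x + m) = b := by
  simp only [neg_div] at hsupp
  filter_upwards [ae_forall_add_intCast_ne ((N : ℝ) / 2)] with x hx
  exact tsum_mul_eq_of_forall_add_intCast_ne hsupp hPoU (add_neg_eq_of_mem_Icc ha0 hasym) hk hx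

theorem stmt_0 (N : ℕ) (hN : 0 < N) (g : ℝ → ℝ)
    (hbdd : ∃ C : ℝ, ∀ x, |g x| ≤ C)
    (hsupp : ∀ x : ℝ, x ∉ Set.Icc (-(N : ℝ) / 2) ((N : ℝ) / 2) → g x = 0)
    (hPoU : ∀ x : ℝ, ∑' n : ℤ, g (x - n) = 1)
    (b : ℝ) (hb : 0 < b) (a : ℤ → ℝ)
    (ha0 : a 0 = b)
    (hasym : ∀ n : ℤ, 1 ≤ n → n ≤ (N : ℤ) - 1 → a n + a (-n) = 2 * b)
    (k : ℝ → ℝ)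
    (hk : ∀ x : ℝ, k x = ∑ n ∈ Finset.Icc (-(N : ℤ) + 1) ((N : ℤ) - 1), a n * g (x + n)) :
    ∀ᵐ x : ℝ, ∑' m : ℤ, g (x + m) * k (x + m) = b :=
  stmt_0_general N g hsupp hPoU b a ha0 hasym k hk
end

section
/- Let g : ℝ → ℝ be supported in [-N/2, N/2] with partition of unity ∑_{n∈ℤ} g(x-n) = 1, and let b > 0. Define h(x) = b g(x) + 2b ∑_{n=1}^{N-1} g(x+n). Then for almost every x, ∑_{m∈ℤ} g(x+m) h(x+m) = b. -/
/-!
Squaring the partition of unity at `x` gives `1 = ∑ₘ u m ^ 2 + 2 ∑_{m < k} u m u k` with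
`u m = g (x + m)`. Off the null set `N/2 - ℤ`, every nonzero `u m` has `x + m` in the open interval
`(-N/2, N/2)`, so two nonzero indices differ by less than `N` and the cross terms are exactly
`u m u (m + n)` with `1 ≤ n ≤ N - 1`, which is what `h` collects.
-/

open MeasureTheory Set

namespace Finset

theorem sq_sum_eq_sum_mul_add_two_mul_sum_gt {ι R : Type*} [LinearOrder ι] [CommSemiring R]
    (s : Finset ι) (f : ι → R) :
    (∑ i ∈ s, f i) ^ 2 = ∑ i ∈ s, f i * (f i + 2 * ∑ j ∈ s with i < j, f j) := by
  induction s using Finset.induction_on_max with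
  | empty => simp
  | insert a s ha ih =>
    have has : a ∉ s := fun h => lt_irrefl a (ha a h)
    have hnone : ({j ∈ insert a s | a < j} : Finset ι) = ∅ :=
      filter_eq_empty_iff.2 fun j hj => by
        rcases mem_insert.1 hj with rfl | hj
        exacts [lt_irrefl j, (ha j hj).not_gt]
    have hrest : ∑ i ∈ s, f i * (f i + 2 * ∑ j ∈ insert a s with i < j, f j)
        = ∑ i ∈ s, f i * (f i + 2 * ∑ j ∈ s with i < j, f j) + 2 * f a * ∑ i ∈ s, f i := by
      rw [mul_sum, ← sum_add_distrib]
      refine sum_congr rfl fun i hi => ?_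
      rw [filter_insert, if_pos (ha i hi), sum_insert (by simp [has])]
      ring
    rw [sum_insert has, sum_insert has, hnone, hrest, ← ih, sum_empty]
    ring

theorem sum_filter_gt_eq_sum_Icc {R : Type*} [AddCommMonoid R] {u : ℤ → R} {S : Finset ℤ}
    {N m : ℤ} (hS : ∀ k, u k ≠ 0 → k ∈ S) (hsep : ∀ k, u k ≠ 0 → |m - k| < N) :
    ∑ k ∈ S with m < k, u k = ∑ n ∈ Icc 1 (N - 1), u (m + n) := by
  have hshift : ∑ n ∈ Icc 1 (N - 1), u (m + n) = ∑ k ∈ Icc (m + 1) (m + (N - 1)), u k := by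
    rw [← map_add_left_Icc, sum_map]
    rfl
  rw [hshift]
  refine sum_congr_of_eq_on_inter (fun k hk hk' => ?_) (fun k hk hk' => ?_) fun _ _ _ => rfl
  · by_contra hu
    have := abs_lt.1 (hsep k hu)
    simp only [mem_filter, mem_Icc] at hk hk'
    omega
  · by_contra hu
    simp only [mem_filter, mem_Icc, not_and] at hk hk'
    exact hk' (hS _ hu) (by omega)

theorem sq_sum_eq_sum_mul_add_two_mul_sum_Icc {R : Type*} [CommSemiring R] {u : ℤ → R}
    {S : Finset ℤ} {N : ℤ} (hS : ∀ k, u k ≠ 0 → k ∈ S)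
    (hsep : ∀ m k, u m ≠ 0 → u k ≠ 0 → |m - k| < N) :
    (∑ m ∈ S, u m) ^ 2 = ∑ m ∈ S, u m * (u m + 2 * ∑ n ∈ Icc 1 (N - 1), u (m + n)) := by
  rw [sq_sum_eq_sum_mul_add_two_mul_sum_gt]
  refine sum_congr rfl fun m _ => ?_
  by_cases hm : u m = 0
  · simp [hm]
  · rw [sum_filter_gt_eq_sum_Icc hS fun k hk => hsep m k hm hk]

end Finset

theorem abs_intCast_sub_lt_of_add_mem_Ioo {x L : ℝ} {m k : ℤ}
    (hm : x + m ∈ Ioo (-L / 2) (L / 2)) (hk : x + k ∈ Ioo (-L / 2) (L / 2)) :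
    |((m - k : ℤ) : ℝ)| < L := by
  rw [abs_lt, Int.cast_sub]
  constructor <;> linarith [hm.1, hm.2, hk.1, hk.2]

theorem add_intCast_mem_Ioo_of_ne_zero {N : ℕ} {g : ℝ → ℝ}
    (hsupp : ∀ y ∉ Icc (-(N : ℝ) / 2) ((N : ℝ) / 2), g y = 0) {x : ℝ}
    (hx : x ∉ range fun m : ℤ => (N : ℝ) / 2 - m) {m : ℤ} (hm : g (x + m) ≠ 0) :
    x + m ∈ Ioo (-(N : ℝ) / 2) ((N : ℝ) / 2) := by
  obtain ⟨hl, hr⟩ := not_not.1 (mt (hsupp _) hm)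
  -- `-N/2 = N/2 - N`, so `x` also avoids `-N/2 - ℤ`
  refine ⟨hl.lt_of_ne fun he => hx ⟨m + N, ?_⟩, hr.lt_of_ne fun he => hx ⟨m, ?_⟩⟩ <;>
    push_cast <;> linarith

theorem stmt_3_general (N : ℕ) (g : ℝ → ℝ)
    (hsupp : ∀ x : ℝ, x ∉ Set.Icc (-(N : ℝ) / 2) ((N : ℝ) / 2) → g x = 0)
    (hPoU : ∀ x : ℝ, ∑' n : ℤ, g (x - n) = 1)
    (b : ℝ) (h : ℝ → ℝ)
    (hh : ∀ x : ℝ, h x = b * g x + 2 * b * ∑ n ∈ Finset.Icc 1 ((N : ℤ) - 1), g (x + n)) :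
    ∀ᵐ x : ℝ, ∑' m : ℤ, g (x + m) * h (x + m) = b := by
  have hae : ∀ᵐ x : ℝ, x ∉ range fun m : ℤ => (N : ℝ) / 2 - m :=
    (countable_range _).ae_notMem _
  filter_upwards [hae] with x hx
  set u : ℤ → ℝ := fun m => g (x + m) with hu
  have hIoo : ∀ m, u m ≠ 0 → x + m ∈ Ioo (-(N : ℝ) / 2) ((N : ℝ) / 2) :=
    fun m => add_intCast_mem_Ioo_of_ne_zero hsupp hx
  set S := Finset.Icc ⌈-(N : ℝ) / 2 - x⌉ ⌊(N : ℝ) / 2 - x⌋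
  have hS : ∀ m, u m ≠ 0 → m ∈ S := fun m hm => by
    obtain ⟨hl, hr⟩ := hIoo m hm
    exact Finset.mem_Icc.2 ⟨Int.ceil_le.2 (by linarith), Int.le_floor.2 (by linarith)⟩
  have hu0 : ∀ m ∉ S, u m = 0 := fun m hm => not_not.1 (mt (hS m) hm)
  have hsep : ∀ m k, u m ≠ 0 → u k ≠ 0 → |m - k| < (N : ℤ) := fun m k hm hk =>
    mod_cast abs_intCast_sub_lt_of_add_mem_Ioo (hIoo m hm) (hIoo k hk)
  have hsum : ∑ m ∈ S, u m = 1 := calc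
    ∑ m ∈ S, u m = ∑' m, u m := (tsum_eq_sum hu0).symm
    _ = ∑' n : ℤ, g (x - n) := by
      rw [← (Equiv.neg ℤ).tsum_eq]
      simp [hu, sub_eq_add_neg]
    _ = 1 := hPoU x
  have hgh : ∀ m : ℤ, g (x + m) * h (x + m)
      = b * (u m * (u m + 2 * ∑ n ∈ Finset.Icc 1 ((N : ℤ) - 1), u (m + n))) := fun m => by
    simp only [hh, hu, Int.cast_add, add_assoc]
    ring
  rw [tsum_congr hgh, tsum_mul_left, tsum_eq_sum fun m hm => by rw [hu0 m hm, zero_mul],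
    ← Finset.sq_sum_eq_sum_mul_add_two_mul_sum_Icc hS hsep, hsum, one_pow, mul_one]

theorem stmt_3 (N : ℕ) (hN : 0 < N) (g : ℝ → ℝ)
    (hbdd : ∃ C : ℝ, ∀ x, |g x| ≤ C)
    (hsupp : ∀ x : ℝ, x ∉ Set.Icc (-(N : ℝ) / 2) ((N : ℝ) / 2) → g x = 0)
    (hPoU : ∀ x : ℝ, ∑' n : ℤ, g (x - n) = 1)
    (b : ℝ) (hb : 0 < b) (h : ℝ → ℝ)
    (hh : ∀ x : ℝ, h x = b * g x + 2 * b * ∑ n ∈ Finset.Icc 1 ((N : ℤ) - 1), g (x + n)) :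
    ∀ᵐ x : ℝ, ∑' m : ℤ, g (x + m) * h (x + m) = b :=
  stmt_3_general N g hsupp hPoU b h hh
end

section
/- For p > 0, the third-order exponential B-spline ε₃' = χ_{[0,1]} * (e^{px}χ_{[0,1]}) * (e^{-px}χ_{[0,1]}) equals (e^{px} + e^{-px} - 2)/(2p²) on [0,1]. -/
open Set MeasureTheory

noncomputable def conv (f g : ℝ → ℝ) : ℝ → ℝ := fun x => ∫ t, f t * g (x - t)

noncomputable def eps3' (p : ℝ) : ℝ → ℝ :=
  conv (conv (Set.indicator (Set.Icc (0 : ℝ) 1) (fun _ => 1))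
      (Set.indicator (Set.Icc (0 : ℝ) 1) (fun x => Real.exp (p * x))))
    (Set.indicator (Set.Icc (0 : ℝ) 1) (fun x => Real.exp (-p * x)))

/-!
Every factor vanishes on `(-∞, 0)`, so each convolution does too, and for `x ∈ [0, 1]` convolving
with a function supported in `[0, 1]` reduces to an integral over `[0, x]`. The inner convolution is
then `(e^{pt} - 1)/p` on `[0, 1]`, and integrating it against `e^{-p(x-t)}` over `[0, x]` is an
elementary exponential integral.
-/

open Real

lemma integral_exp_mul {c : ℝ} (hc : c ≠ 0) (a b : ℝ) :
    ∫ x in a..b, exp (c * x) = (exp (c * b) - exp (c * a)) / c := by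
  rw [intervalIntegral.integral_comp_mul_left (fun x => exp x) hc, integral_exp, smul_eq_mul,
    inv_mul_eq_div]

lemma indicator_Icc_zero_one_of_neg (h : ℝ → ℝ) : ∀ t < 0, (Icc 0 1).indicator h t = 0 :=
  fun _ ht => indicator_of_notMem (fun hmem => ht.not_ge hmem.1) h

lemma conv_of_neg {f g : ℝ → ℝ} (hf : ∀ t < 0, f t = 0) (hg : ∀ t < 0, g t = 0) {x : ℝ}
    (hx : x < 0) : conv f g x = 0 := by
  have hzero : ∀ t, f t * g (x - t) = 0 := fun t => by
    rcases lt_or_ge t 0 with ht | ht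
    · rw [hf t ht, zero_mul]
    · rw [hg (x - t) (by linarith), mul_zero]
  simp only [conv, hzero, integral_zero]

lemma conv_indicator_Icc_eq_intervalIntegral {f h : ℝ → ℝ} (hf : ∀ t < 0, f t = 0) {x : ℝ}
    (hx : x ∈ Icc (0 : ℝ) 1) :
    conv f ((Icc 0 1).indicator h) x = ∫ t in 0..x, f t * h (x - t) := by
  have hwindow : (fun t => f t * (Icc 0 1).indicator h (x - t))
      = (Icc 0 x).indicator (fun t => f t * h (x - t)) := by
    funext t
    by_cases ht : t ∈ Icc 0 x
    · rw [indicator_of_mem ht,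
        indicator_of_mem (show x - t ∈ Icc 0 1 from ⟨by linarith [ht.2], by linarith [ht.1, hx.2]⟩)]
    · rw [indicator_of_notMem ht]
      rcases lt_or_ge t 0 with ht0 | ht0
      · rw [hf t ht0, zero_mul]
      · rw [indicator_Icc_zero_one_of_neg h _ (by linarith [show x < t by simp_all]), mul_zero]
  rw [conv, hwindow, integral_indicator measurableSet_Icc, integral_Icc_eq_integral_Ioc,
    ← intervalIntegral.integral_of_le hx.1]

lemma conv_indicator_exp_of_mem {p : ℝ} (hp : p ≠ 0) {t : ℝ} (ht : t ∈ Icc (0 : ℝ) 1) :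
    conv ((Icc 0 1).indicator fun _ => 1) ((Icc 0 1).indicator fun x => exp (p * x)) t
      = (exp (p * t) - 1) / p := by
  rw [conv_indicator_Icc_eq_intervalIntegral (indicator_Icc_zero_one_of_neg _) ht]
  calc ∫ s in 0..t, (Icc 0 1).indicator (fun _ => (1 : ℝ)) s * exp (p * (t - s))
      = ∫ s in 0..t, exp (p * (t - s)) := by
        refine intervalIntegral.integral_congr fun s hs => ?_
        rw [uIcc_of_le ht.1] at hs
        simp [indicator_of_mem (show s ∈ Icc (0 : ℝ) 1 from ⟨hs.1, hs.2.trans ht.2⟩)]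
    _ = ∫ u in 0..t, exp (p * u) := by
        rw [intervalIntegral.integral_comp_sub_left (fun u => exp (p * u)), sub_self, sub_zero]
    _ = (exp (p * t) - 1) / p := by rw [integral_exp_mul hp, mul_zero, exp_zero]

lemma integral_exp_sub_one_div_mul_exp_neg {p : ℝ} (hp : p ≠ 0) (x : ℝ) :
    ∫ t in 0..x, (exp (p * t) - 1) / p * exp (-p * (x - t))
      = (exp (p * x) + exp (-p * x) - 2) / (2 * p ^ 2) := by
  have hsplit : ∀ t, (exp (p * t) - 1) / p * exp (-p * (x - t))
      = exp (-p * x) / p * exp (2 * p * t) - exp (-p * x) / p * exp (p * t) := fun t => by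
    have hsq : exp (2 * p * t) = exp (p * t) * exp (p * t) := by rw [← exp_add]; ring_nf
    have hshift : exp (-p * (x - t)) = exp (-p * x) * exp (p * t) := by rw [← exp_add]; ring_nf
    rw [hsq, hshift]
    ring
  simp_rw [hsplit]
  rw [intervalIntegral.integral_sub (Continuous.intervalIntegrable (by fun_prop) _ _)
      (Continuous.intervalIntegrable (by fun_prop) _ _),
    intervalIntegral.integral_const_mul, intervalIntegral.integral_const_mul,
    integral_exp_mul (mul_ne_zero two_ne_zero hp), integral_exp_mul hp]
  have hsq : exp (2 * p * x) = exp (p * x) * exp (p * x) := by rw [← exp_add]; ring_nf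
  have hinv : exp (-p * x) = (exp (p * x))⁻¹ := by rw [neg_mul, exp_neg]
  rw [hsq, hinv, mul_zero, mul_zero, exp_zero]
  field_simp
  ring

theorem stmt_16 (p : ℝ) (hp : 0 < p) :
    ∀ x ∈ Set.Icc (0 : ℝ) 1,
      eps3' p x = (Real.exp (p * x) + Real.exp (-p * x) - 2) / (2 * p ^ 2) := by
  intro x hx
  have hinner_neg : ∀ t < 0, conv ((Icc 0 1).indicator fun _ => 1)
      ((Icc 0 1).indicator fun x => exp (p * x)) t = 0 := fun t ht =>
    conv_of_neg (indicator_Icc_zero_one_of_neg _) (indicator_Icc_zero_one_of_neg _) ht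
  rw [eps3', conv_indicator_Icc_eq_intervalIntegral hinner_neg hx,
    ← integral_exp_sub_one_div_mul_exp_neg hp.ne' x]
  refine intervalIntegral.integral_congr fun t ht => ?_
  rw [uIcc_of_le hx.1] at ht
  rw [conv_indicator_exp_of_mem hp.ne' ⟨ht.1, ht.2.trans hx.2⟩]
end

section
/- Let g : ℝ → ℝ be continuous, supported exactly on [-N/2, N/2], strictly positive on (-N/2, N/2), and satisfy ∑_{n∈ℤ} g(x - n) = 1. Then G(x) := ∑_{n∈ℤ} |g(x - n)|² satisfies 1/(2N-1) ≤ G(x) ≤ 1 for all x ∈ ℝ; in particular G is bounded above and below by positive constants. -/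
/-! Continuity forces `g` to vanish at `±N/2` as well, so for fixed `x` only the `n` with
`x - n ∈ (-N/2, N/2)` contribute, and there are at most `N` of them. The weights `g (x - n)`
are nonnegative with sum `1`, hence each is at most `1` and `G x ≤ ∑ g (x - n) = 1`, while
Cauchy–Schwarz over the `N` contributing terms gives `1 ≤ N * G x`. -/

open Set

theorem Continuous.eq_zero_of_notMem_interior {X Y : Type*} [TopologicalSpace X]
    [TopologicalSpace Y] [T1Space Y] [Zero Y] {f : X → Y} (hf : Continuous f) {s : Set X}
    (h : ∀ x ∉ s, f x = 0) {x : X} (hx : x ∉ interior s) : f x = 0 := by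
  have : closure sᶜ ⊆ f ⁻¹' {0} := closure_minimal h (isClosed_singleton.preimage hf)
  rw [closure_compl] at this
  exact this hx

theorem Int.mem_Ioo_floor_of_lt_of_lt {a : ℝ} {L : ℕ} {n : ℤ} (h₁ : a < n) (h₂ : n < a + L) :
    n ∈ Finset.Ioo ⌊a⌋ (⌊a⌋ + 1 + L) := by
  have h₃ : (n : ℝ) < ⌊a⌋ + 1 + L := by linarith [Int.lt_floor_add_one a]
  exact Finset.mem_Ioo.mpr ⟨Int.floor_lt.mpr h₁, by exact_mod_cast h₃⟩

theorem one_le_card_mul_tsum_sq {ι : Type*} {w : ι → ℝ} {s : Finset ι}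
    (hw : ∀ i ∉ s, w i = 0) (h₁ : ∑' i, w i = 1) : 1 ≤ s.card * ∑' i, w i ^ 2 := by
  rw [tsum_eq_sum hw] at h₁
  rw [tsum_eq_sum (s := s) fun i hi => by simp [hw i hi]]
  simpa [h₁] using sq_sum_le_card_mul_sum_sq (s := s) (f := w)

theorem tsum_sq_le_one {ι : Type*} {w : ι → ℝ} (hw : ∀ i, 0 ≤ w i) (hs : Summable w)
    (h₁ : ∑' i, w i = 1) : ∑' i, w i ^ 2 ≤ 1 := by
  have hle : ∀ i, w i ^ 2 ≤ w i := fun i => by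
    have : w i ≤ 1 := h₁ ▸ hs.le_tsum i fun j _ => hw j
    nlinarith [hw i]
  calc ∑' i, w i ^ 2 ≤ ∑' i, w i :=
        (hs.of_nonneg_of_le (fun i => sq_nonneg _) hle).tsum_le_tsum hle hs
    _ = 1 := h₁

theorem one_div_two_mul_sub_one_le {N : ℕ} {G : ℝ} (h : 1 ≤ N * G) : 1 / (2 * N - 1) ≤ G := by
  have hN : (1 : ℝ) ≤ N := Nat.one_le_cast.mpr <| Nat.pos_of_ne_zero <| by
    rintro rfl
    norm_num at h
  rw [div_le_iff₀ (by linarith)]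
  nlinarith

theorem stmt_18_general (N : ℕ) (g : ℝ → ℝ)
    (hcont : Continuous g)
    (hsupp : ∀ x : ℝ, x ∉ Set.Icc (-(N : ℝ) / 2) ((N : ℝ) / 2) → g x = 0)
    (hpos : ∀ x ∈ Set.Ioo (-(N : ℝ) / 2) ((N : ℝ) / 2), 0 < g x)
    (hPoU : ∀ x : ℝ, ∑' n : ℤ, g (x - n) = 1) :
    ∀ x : ℝ, 1 / (2 * (N : ℝ) - 1) ≤ ∑' n : ℤ, |g (x - n)| ^ 2 ∧
      ∑' n : ℤ, |g (x - n)| ^ 2 ≤ 1 := by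
  have hzero : ∀ y ∉ Ioo (-(N : ℝ) / 2) (N / 2), g y = 0 := fun y hy =>
    hcont.eq_zero_of_notMem_interior hsupp (by rwa [interior_Icc])
  have hnonneg : ∀ y, 0 ≤ g y := fun y => by
    by_cases hy : y ∈ Ioo (-(N : ℝ) / 2) (N / 2)
    exacts [(hpos y hy).le, (hzero y hy).ge]
  intro x
  set s := Finset.Ioo ⌊x - N / 2⌋ (⌊x - N / 2⌋ + 1 + N)
  have hcard : s.card = N := by rw [Int.card_Ioo]; omega
  have hlocal : ∀ n ∉ s, g (x - n) = 0 := fun n hn => hzero _ fun ⟨h₁, h₂⟩ =>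
    hn (Int.mem_Ioo_floor_of_lt_of_lt (by linarith) (by linarith))
  simp_rw [sq_abs]
  refine ⟨one_div_two_mul_sub_one_le ?_, tsum_sq_le_one (fun n => hnonneg _)
    (summable_of_ne_finset_zero hlocal) (hPoU x)⟩
  simpa [hcard] using one_le_card_mul_tsum_sq hlocal (hPoU x)

theorem stmt_18 (N : ℕ) (hN : 1 ≤ N) (g : ℝ → ℝ)
    (hcont : Continuous g)
    (hsupp : ∀ x : ℝ, x ∉ Set.Icc (-(N : ℝ) / 2) ((N : ℝ) / 2) → g x = 0)
    (hpos : ∀ x ∈ Set.Ioo (-(N : ℝ) / 2) ((N : ℝ) / 2), 0 < g x)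
    (hPoU : ∀ x : ℝ, ∑' n : ℤ, g (x - n) = 1) :
    ∀ x : ℝ, 1 / (2 * (N : ℝ) - 1) ≤ ∑' n : ℤ, |g (x - n)| ^ 2 ∧
      ∑' n : ℤ, |g (x - n)| ^ 2 ≤ 1 :=
  stmt_18_general N g hcont hsupp hpos hPoU
end
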